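/- arXiv:2605.21160 — 2 statements merged into one kernel-verified Lean document; each statement's English description precedes it below -/
import Mathlib

section
/- Let n, m be positive integers with 1 ≤ m ≤ n. Let D ⊆ ℝ × ℝ^(n−m) × ℝ^m be an open set, let V : D → ℝ^m be differentiable on D, and suppose that at every point p ∈ D the partial Fréchet derivative J_b(p) := (D_{x_b}V)(p) : ℝ^m → ℝ^m is a linear isomorphism. Let f_a : D → ℝ^(n−m) be any function, and define f_b : D → ℝ^m by f_b(p) := − J_b(p)⁻¹ ( (D_{x_a}V)(p)(f_a(p)) + ∂V/∂t (p) ). Then at every p ∈ D the identity ∂V/∂t (p) + (D_{x_a}V)(p)(f_a(p)) + J_b(p)(f_b(p)) = 0 holds, and consequently for every differentiable curve (a, b) : I → ℝ^(n−m) × ℝ^m on an interval I with graph in D satisfying a' = f_a(t, a, b) and b' = f_b(t, a, b), the function t ↦ V(t, a(t), b(t)) is constant on I. -/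
/-!
Along a solution curve `γ t = (t, a t, b t)` the chain rule gives
`d/dt V (γ t) = DV (γ t) (1, a', b') = ∂V/∂t + (D_{x_a}V) a' + J_b b'`, and the choice of `f_b`
is exactly the one that makes this sum vanish. A function with zero derivative on an interval
is constant, by the mean value inequality.
-/

open Set

theorem Convex.eq_of_hasDerivWithinAt_zero {E : Type*} [NormedAddCommGroup E] [NormedSpace ℝ E]
    {f : ℝ → E} {s : Set ℝ} (hs : Convex ℝ s) (hf : ∀ x ∈ s, HasDerivWithinAt f 0 s x)
    {x y : ℝ} (hx : x ∈ s) (hy : y ∈ s) : f y = f x := by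
  have hle : ‖f y - f x‖ ≤ 0 * ‖y - x‖ :=
    hs.norm_image_sub_le_of_norm_hasDerivWithin_le hf (fun _ _ => norm_zero.le) hx hy
  rwa [zero_mul, norm_le_zero_iff, sub_eq_zero] at hle

section FirstIntegral

variable {E F : Type*} [NormedAddCommGroup E] [NormedSpace ℝ E]
  [NormedAddCommGroup F] [NormedSpace ℝ F]

theorem eq_of_hasFDerivAt_apply_hasDerivAt_eq_zero {V : E → F} {DV : E → E →L[ℝ] F}
    {γ γ' : ℝ → E} {I : Set ℝ} (hI : I.OrdConnected)
    (hV : ∀ t ∈ I, HasFDerivAt V (DV (γ t)) (γ t)) (hγ : ∀ t ∈ I, HasDerivAt γ (γ' t) t)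
    (htangent : ∀ t ∈ I, DV (γ t) (γ' t) = 0) {s t : ℝ} (hs : s ∈ I) (ht : t ∈ I) :
    V (γ t) = V (γ s) := by
  refine hI.convex.eq_of_hasDerivWithinAt_zero (f := V ∘ γ) (fun u hu => ?_) hs ht
  have hcomp := (hV u hu).comp_hasDerivAt u (hγ u hu)
  rw [htangent u hu] at hcomp
  exact hcomp.hasDerivWithinAt

end FirstIntegral

theorem ContinuousLinearMap.apply_prodMk_prodMk_eq_add {R E₁ E₂ E₃ F : Type*} [Semiring R]
    [TopologicalSpace E₁] [AddCommMonoid E₁] [Module R E₁]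
    [TopologicalSpace E₂] [AddCommMonoid E₂] [Module R E₂]
    [TopologicalSpace E₃] [AddCommMonoid E₃] [Module R E₃]
    [TopologicalSpace F] [AddCommMonoid F] [Module R F]
    (L : E₁ × E₂ × E₃ →L[R] F) (x : E₁) (y : E₂) (z : E₃) :
    L (x, y, z) = L (x, 0, 0) + L (0, y, 0) + L (0, 0, z) := by
  rw [← map_add, ← map_add]
  simp only [Prod.mk_add_mk, add_zero, zero_add]

theorem backward_generation_inversion_formula_general
    (n m : ℕ)
    (D : Set (ℝ × (Fin (n - m) → ℝ) × (Fin m → ℝ)))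
    (V : ℝ × (Fin (n - m) → ℝ) × (Fin m → ℝ) → (Fin m → ℝ))
    (DV : ℝ × (Fin (n - m) → ℝ) × (Fin m → ℝ) →
      (ℝ × (Fin (n - m) → ℝ) × (Fin m → ℝ)) →L[ℝ] (Fin m → ℝ))
    (hV : ∀ p ∈ D, HasFDerivAt V (DV p) p)
    (Jb : ℝ × (Fin (n - m) → ℝ) × (Fin m → ℝ) → (Fin m → ℝ) ≃L[ℝ] (Fin m → ℝ))
    (hJb : ∀ p ∈ D, ∀ v : Fin m → ℝ, Jb p v = DV p (0, 0, v))
    (fa : ℝ × (Fin (n - m) → ℝ) × (Fin m → ℝ) → (Fin (n - m) → ℝ))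
    (fb : ℝ × (Fin (n - m) → ℝ) × (Fin m → ℝ) → (Fin m → ℝ))
    (hfb : ∀ p ∈ D,
      fb p = - (Jb p).symm (DV p (0, fa p, 0) + DV p (1, 0, 0))) :
    (∀ p ∈ D, DV p (1, 0, 0) + DV p (0, fa p, 0) + Jb p (fb p) = 0) ∧
    (∀ I : Set ℝ, I.OrdConnected →
      ∀ (a : ℝ → (Fin (n - m) → ℝ)) (b : ℝ → (Fin m → ℝ)),
      (∀ t ∈ I, (t, a t, b t) ∈ D) →
      (∀ t ∈ I, HasDerivAt a (fa (t, a t, b t)) t) →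
      (∀ t ∈ I, HasDerivAt b (fb (t, a t, b t)) t) →
      ∀ s ∈ I, ∀ t ∈ I, V (t, a t, b t) = V (s, a s, b s)) := by
  have hzero : ∀ p ∈ D, DV p (1, 0, 0) + DV p (0, fa p, 0) + Jb p (fb p) = 0 := by
    intro p hp
    rw [hfb p hp, map_neg, (Jb p).apply_symm_apply]
    abel
  refine ⟨hzero, fun I hI a b hmem ha hb s hs t ht => ?_⟩
  refine eq_of_hasFDerivAt_apply_hasDerivAt_eq_zero (γ := fun t => (t, a t, b t))
    (γ' := fun t => (1, fa (t, a t, b t), fb (t, a t, b t))) hI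
    (fun u hu => hV _ (hmem u hu))
    (fun u hu => (hasDerivAt_id u).prodMk ((ha u hu).prodMk (hb u hu))) (fun u hu => ?_) hs ht
  rw [ContinuousLinearMap.apply_prodMk_prodMk_eq_add, ← hJb _ (hmem u hu)]
  exact hzero _ (hmem u hu)

/-- **Backward generation via the explicit inversion formula.**
Let `V : D → ℝ^m` be differentiable on the open set `D ⊆ ℝ × ℝ^(n-m) × ℝ^m`, with full
Fréchet derivative `DV p` at every `p ∈ D`, and suppose the partial derivative in the
`x_b`-variables is a continuous linear isomorphism `Jb p` (i.e. `Jb p v = DV p (0, 0, v)`).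
Given any `fa`, define `fb p := - (Jb p)⁻¹ ((D_{x_a}V)(p)(fa p) + ∂V/∂t (p))`.
Then the linear identity `∂V/∂t + (D_{x_a}V)(fa) + Jb (fb) = 0` holds at every point of `D`,
and consequently `t ↦ V (t, a t, b t)` is constant along every differentiable solution curve
`(a, b)` of the assembled system on an interval `I` whose graph lies in `D`. -/
theorem backward_generation_inversion_formula
    (n m : ℕ) (hm : 1 ≤ m) (hmn : m ≤ n)
    (D : Set (ℝ × (Fin (n - m) → ℝ) × (Fin m → ℝ))) (hD : IsOpen D)
    (V : ℝ × (Fin (n - m) → ℝ) × (Fin m → ℝ) → (Fin m → ℝ))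
    (DV : ℝ × (Fin (n - m) → ℝ) × (Fin m → ℝ) →
      (ℝ × (Fin (n - m) → ℝ) × (Fin m → ℝ)) →L[ℝ] (Fin m → ℝ))
    (hV : ∀ p ∈ D, HasFDerivAt V (DV p) p)
    (Jb : ℝ × (Fin (n - m) → ℝ) × (Fin m → ℝ) → (Fin m → ℝ) ≃L[ℝ] (Fin m → ℝ))
    (hJb : ∀ p ∈ D, ∀ v : Fin m → ℝ, Jb p v = DV p (0, 0, v))
    (fa : ℝ × (Fin (n - m) → ℝ) × (Fin m → ℝ) → (Fin (n - m) → ℝ))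
    (fb : ℝ × (Fin (n - m) → ℝ) × (Fin m → ℝ) → (Fin m → ℝ))
    (hfb : ∀ p ∈ D,
      fb p = - (Jb p).symm (DV p (0, fa p, 0) + DV p (1, 0, 0))) :
    (∀ p ∈ D, DV p (1, 0, 0) + DV p (0, fa p, 0) + Jb p (fb p) = 0) ∧
    (∀ I : Set ℝ, I.OrdConnected →
      ∀ (a : ℝ → (Fin (n - m) → ℝ)) (b : ℝ → (Fin m → ℝ)),
      (∀ t ∈ I, (t, a t, b t) ∈ D) →
      (∀ t ∈ I, HasDerivAt a (fa (t, a t, b t)) t) →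
      (∀ t ∈ I, HasDerivAt b (fb (t, a t, b t)) t) →
      ∀ s ∈ I, ∀ t ∈ I, V (t, a t, b t) = V (s, a s, b s)) :=
  backward_generation_inversion_formula_general n m D V DV hV Jb hJb fa fb hfb
end

section
/- Let I ⊆ ℝ be an interval and let x, y : I → ℝ be differentiable functions such that x(t) − y(t) > 0, t ≠ 0, and 2 x(t) + 3 ≠ 0 for all t ∈ I, and such that x'(t) = 2 (x(t) − y(t)) · log(x(t) − y(t)) / (2 t x(t) + 3 t) and y'(t) = (−2 x(t)² + 2 x(t) y(t) − x(t) + y(t)) · log(x(t) − y(t)) / (2 t x(t) + 3 t) for all t ∈ I. Then the function t ↦ log(x(t) − y(t)) / t is constant on I. -/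
/-!
Along a solution, `u = x - y` satisfies `u' = u log u / t`: the numerator of `x' - y'` factors as
`(x - y)(2x + 3) log (x - y)`, and the factor `2x + 3` cancels against the denominator
`t (2x + 3)`. Then `(log u)' = log u / t`, so `log u / t` has derivative zero and is constant on
the interval.
-/

theorem Convex.eq_of_forall_hasDerivWithinAt_zero {E : Type*} [NormedAddCommGroup E]
    [NormedSpace ℝ E] {s : Set ℝ} (hs : Convex ℝ s) {f : ℝ → E}
    (hf : ∀ t ∈ s, HasDerivWithinAt f 0 s t) {a b : ℝ} (ha : a ∈ s) (hb : b ∈ s) :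
    f b = f a := by
  have h := hs.norm_image_sub_le_of_norm_hasDerivWithin_le hf (C := 0) (by simp) ha hb
  rwa [zero_mul, norm_le_zero_iff, sub_eq_zero] at h

theorem hasDerivAt_log_div_id_eq_zero {u : ℝ → ℝ} {t : ℝ} (hu : u t ≠ 0) (ht : t ≠ 0)
    (hu' : HasDerivAt u (u t * Real.log (u t) / t) t) :
    HasDerivAt (fun s => Real.log (u s) / s) 0 t := by
  refine (((Real.hasDerivAt_log hu).comp t hu').div (hasDerivAt_id' t) ht).congr_deriv ?_
  field_simp
  simp

theorem logarithmic_system_rhs_sub {a b t L : ℝ} (ht : t ≠ 0) (ha : 2 * a + 3 ≠ 0) :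
    2 * (a - b) * L / (2 * t * a + 3 * t)
      - (-2 * a ^ 2 + 2 * a * b - a + b) * L / (2 * t * a + 3 * t) = (a - b) * L / t := by
  rw [← sub_div, show 2 * t * a + 3 * t = t * (2 * a + 3) by ring]
  field_simp
  ring

/-- **First integral `V₂ = log (x - y) / t` of a non-autonomous logarithmic system.**
If on an interval `I` we have `x t - y t > 0`, `t ≠ 0` and `2 x t + 3 ≠ 0`, and
`x' = 2 (x - y) log (x - y) / (2 t x + 3 t)`,
`y' = (-2 x² + 2 x y - x + y) log (x - y) / (2 t x + 3 t)`,
then `t ↦ log (x t - y t) / t` is constant on `I`. -/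
theorem logarithmic_system_first_integral_two
    (I : Set ℝ) (hI : I.OrdConnected)
    (x y : ℝ → ℝ)
    (hpos : ∀ t ∈ I, x t - y t > 0)
    (ht : ∀ t ∈ I, t ≠ 0)
    (hx3 : ∀ t ∈ I, 2 * x t + 3 ≠ 0)
    (hx : ∀ t ∈ I, HasDerivAt x
      (2 * (x t - y t) * Real.log (x t - y t) / (2 * t * x t + 3 * t)) t)
    (hy : ∀ t ∈ I, HasDerivAt y
      ((-2 * x t ^ 2 + 2 * x t * y t - x t + y t) * Real.log (x t - y t)
        / (2 * t * x t + 3 * t)) t) :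
    ∀ s ∈ I, ∀ t ∈ I, Real.log (x t - y t) / t = Real.log (x s - y s) / s := by
  have hderiv : ∀ t ∈ I, HasDerivAt (fun t => Real.log (x t - y t) / t) 0 t := by
    intro t htI
    refine hasDerivAt_log_div_id_eq_zero (u := x - y) (hpos t htI).ne' (ht t htI) ?_
    simpa only [Pi.sub_apply, logarithmic_system_rhs_sub (ht t htI) (hx3 t htI)]
      using (hx t htI).sub (hy t htI)
  intro s hs t htI
  exact hI.convex.eq_of_forall_hasDerivWithinAt_zero
    (fun u hu => (hderiv u hu).hasDerivWithinAt) hs htI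
end
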